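/- Under the same setup as the thermal-state entanglement criterion, if for some index j the inequality exp(−E_j/(k_B T))/Z > 1/(1 + R(|e_j⟩)) holds, where |e_j⟩ is the j-th energy eigenstate, then the thermal state ρ_T is entangled. -/

import Mathlib

open Matrix
open scoped ComplexOrder BigOperators

/-- A density matrix: positive semidefinite with unit trace. -/
def IsDensity {n : Type*} [Fintype n] [DecidableEq n] (M : Matrix n n ℂ) : Prop :=
  M.PosSemidef ∧ M.trace = 1

/-- The global robustness of entanglement of `σ` relative to the set `S` of
separable states. -/
noncomputable def robustness {n : Type*} [Fintype n] [DecidableEq n]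
    (S : Set (Matrix n n ℂ)) (σ : Matrix n n ℂ) : ℝ :=
  sInf {t : ℝ | 0 ≤ t ∧ ∃ τ : Matrix n n ℂ, IsDensity τ ∧
    (1 / (1 + t)) • (σ + t • τ) ∈ S}

/-- The rank-one projector `|ψ⟩⟨ψ|`. -/
def proj {n : Type*} (ψ : n → ℂ) : Matrix n n ℂ :=
  Matrix.vecMulVec ψ (star ψ)

lemma proj_posSemidef {n : Type*} [Fintype n] (ψ : n → ℂ) : (proj ψ).PosSemidef := by
  rw [Matrix.posSemidef_iff_dotProduct_mulVec]
  constructor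
  · ext i k
    simp [proj, Matrix.conjTranspose_apply, Matrix.vecMulVec_apply, mul_comm]
  · intro x
    have h : (proj ψ) *ᵥ x = (star ψ ⬝ᵥ x) • ψ := by
      ext i
      simp [proj, Matrix.mulVec, Matrix.vecMulVec_apply, dotProduct, Finset.mul_sum,
        mul_comm, mul_left_comm]
    rw [h, dotProduct_smul]
    have h2 : star x ⬝ᵥ ψ = star (star ψ ⬝ᵥ x) := by
      simp only [dotProduct, star_sum, star_mul', star_star, Pi.star_apply]
      exact Finset.sum_congr rfl fun k _ => mul_comm _ _
    rw [h2, smul_eq_mul, mul_comm]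
    exact star_mul_self_nonneg _

lemma proj_trace {n : Type*} [Fintype n] {D : ℕ} (e : Fin D → (n → ℂ))
    (horth : ∀ i j, star (e i) ⬝ᵥ e j = if i = j then 1 else 0) (i : Fin D) :
    (proj (e i)).trace = 1 := by
  have h := horth i i
  simp at h
  rw [← h]
  simp [proj, Matrix.trace, Matrix.diag, Matrix.vecMulVec_apply, dotProduct, mul_comm]

lemma posSemidef_real_smul {n : Type*} [Fintype n] {M : Matrix n n ℂ} (hM : M.PosSemidef)
    {r : ℝ} (hr : 0 ≤ r) : (r • M).PosSemidef := by
  rw [Matrix.posSemidef_iff_dotProduct_mulVec]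
  constructor
  · ext i k
    have h := congrFun (congrFun hM.1 i) k
    simp only [Matrix.conjTranspose_apply, Matrix.smul_apply] at *
    rw [← h]
    simp [Complex.real_smul]
  · intro x
    rw [Matrix.smul_mulVec, dotProduct_smul]
    have : (0 : ℂ) ≤ (r : ℂ) * (star x ⬝ᵥ M *ᵥ x) :=
      mul_nonneg (by exact_mod_cast hr) (hM.dotProduct_mulVec_nonneg x)
    simpa [Complex.real_smul] using this

lemma posSemidef_sum {n : Type*} [Fintype n] {D : ℕ} (s : Finset (Fin D))
    (f : Fin D → Matrix n n ℂ) (hf : ∀ i ∈ s, (f i).PosSemidef) :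
    (∑ i ∈ s, f i).PosSemidef := by
  classical
  induction s using Finset.induction_on with
  | empty => simpa using Matrix.PosSemidef.zero
  | @insert a s h ih =>
    rw [Finset.sum_insert h]
    exact (hf _ (Finset.mem_insert_self _ _)).add
      (ih fun i hi => hf i (Finset.mem_insert_of_mem hi))

/-- If for some index `j` the population of `|e_j⟩` exceeds `1/(1 + R(|e_j⟩))`,
then the thermal state is entangled. -/
theorem stmt_2 {n : Type*} [Fintype n] [DecidableEq n] {D : ℕ} [NeZero D]
    (S : Set (Matrix n n ℂ)) (hS : Convex ℝ S)
    (hmm : ((Fintype.card n : ℝ)⁻¹) • (1 : Matrix n n ℂ) ∈ S)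
    (e : Fin D → (n → ℂ))
    (horth : ∀ i j, star (e i) ⬝ᵥ e j = if i = j then 1 else 0)
    (E : Fin D → ℝ) (kB T : ℝ) (hkB : 0 < kB) (hT : 0 < T)
    (Z : ℝ) (hZ : Z = ∑ i, Real.exp (-(E i) / (kB * T)))
    (ρT : Matrix n n ℂ)
    (hρT : ρT = Z⁻¹ • ∑ i, Real.exp (-(E i) / (kB * T)) • proj (e i))
    (j : Fin D)
    (hattain : ∃ τ : Matrix n n ℂ, IsDensity τ ∧
      (1 / (1 + robustness S (proj (e j)))) •
        (proj (e j) + robustness S (proj (e j)) • τ) ∈ S)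
    (hcond : Real.exp (-(E j) / (kB * T)) / Z > 1 / (1 + robustness S (proj (e j)))) :
    ρT ∉ S := by
  classical
  intro hmem
  set R := robustness S (proj (e j)) with hR
  set c : Fin D → ℝ := fun i => Real.exp (-(E i) / (kB * T)) with hc
  have hcpos : ∀ i, 0 < c i := fun i => Real.exp_pos _
  have hZpos : 0 < Z := by
    rw [hZ]
    exact Finset.sum_pos (fun i _ => hcpos i) ⟨j, Finset.mem_univ j⟩
  have hρT' : ρT = Z⁻¹ • ∑ i, c i • proj (e i) := hρT
  set p : ℝ := c j / Z with hp
  have hppos : 0 < p := div_pos (hcpos j) hZpos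
  have hple : p ≤ 1 := by
    rw [hp, div_le_one hZpos, hZ]
    exact Finset.single_le_sum (fun i _ => (hcpos i).le) (Finset.mem_univ j)
  have hRnonneg : 0 ≤ R := by
    apply Real.sInf_nonneg
    rintro x ⟨hx, -⟩
    exact hx
  have hkey : ∃ t : ℝ, (0 ≤ t ∧ ∃ τ : Matrix n n ℂ, IsDensity τ ∧
      (1 / (1 + t)) • (proj (e j) + t • τ) ∈ S) ∧ 1 / (1 + t) = p := by
    rcases eq_or_lt_of_le hple with hpeq | hplt
    · -- p = 1 : ρT = proj (e j)
      have hall : ∀ i : Fin D, i = j := by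
        intro i
        by_contra hij
        have h1 : c i ≤ ∑ k ∈ Finset.univ.erase j, c k :=
          Finset.single_le_sum (fun k _ => (hcpos k).le)
            (Finset.mem_erase.mpr ⟨hij, Finset.mem_univ i⟩)
        have h2 : Z = c j + ∑ k ∈ Finset.univ.erase j, c k := by
          rw [hZ, Finset.add_sum_erase _ _ (Finset.mem_univ j)]
        have hlt : c j < Z := by
          have := hcpos i
          linarith
        have : p < 1 := by
          rw [hp, div_lt_one hZpos]
          exact hlt
        linarith [hpeq.symm ▸ this]
      have hZj : Z = c j := by
        rw [hZ, Finset.sum_eq_single j (fun i _ hij => absurd (hall i) hij)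
          (fun h => absurd (Finset.mem_univ j) h)]
      have hρ : ρT = proj (e j) := by
        rw [hρT', Finset.sum_eq_single j (fun i _ hij => absurd (hall i) hij)
          (fun h => absurd (Finset.mem_univ j) h), hZj, smul_smul,
          inv_mul_cancel₀ (hcpos j).ne', one_smul]
      refine ⟨0, ⟨le_refl 0, proj (e j), ⟨proj_posSemidef _, proj_trace e horth j⟩, ?_⟩, ?_⟩
      · simpa using hρ ▸ hmem
      · simpa using hpeq.symm
    · -- p < 1
      set q : ℝ := 1 - p with hq
      have hqpos : 0 < q := by rw [hq]; linarith
      set t : ℝ := q / p with ht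
      have htpos : 0 < t := div_pos hqpos hppos
      set τ : Matrix n n ℂ := q⁻¹ • (ρT - p • proj (e j)) with hτ
      have hrest : ρT - p • proj (e j) =
          ∑ i ∈ Finset.univ.erase j, (Z⁻¹ * c i) • proj (e i) := by
        have hdec : ρT = (Z⁻¹ * c j) • proj (e j)
            + ∑ i ∈ Finset.univ.erase j, (Z⁻¹ * c i) • proj (e i) := by
          rw [hρT', Finset.smul_sum]
          simp only [smul_smul]
          rw [← Finset.add_sum_erase _ _ (Finset.mem_univ j)]
        have hpc : p = Z⁻¹ * c j := by rw [hp, div_eq_inv_mul]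
        rw [hdec, ← hpc, add_sub_cancel_left]
      have hτpsd : τ.PosSemidef := by
        rw [hτ, hrest]
        refine posSemidef_real_smul ?_ (by positivity)
        exact posSemidef_sum _ _ fun i _ =>
          posSemidef_real_smul (proj_posSemidef _) (by positivity)
      have hτtr : τ.trace = 1 := by
        rw [hτ, hrest, Matrix.trace_smul, Matrix.trace_sum]
        have : ∀ i ∈ Finset.univ.erase j, ((Z⁻¹ * c i) • proj (e i)).trace
            = ((Z⁻¹ * c i : ℝ) : ℂ) := by
          intro i _
          rw [Matrix.trace_smul, proj_trace e horth i]
          simp [Complex.real_smul]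
        rw [Finset.sum_congr rfl this, ← Complex.ofReal_sum]
        have hsum : ∑ i ∈ Finset.univ.erase j, Z⁻¹ * c i = q := by
          rw [← Finset.mul_sum]
          have h2 : ∑ k ∈ Finset.univ.erase j, c k = Z - c j := by
            have := Finset.add_sum_erase Finset.univ c (Finset.mem_univ j)
            rw [← hZ] at this
            linarith
          rw [h2, hq, hp]
          field_simp
        rw [hsum, Complex.real_smul, ← Complex.ofReal_mul,
          inv_mul_cancel₀ hqpos.ne', Complex.ofReal_one]
      have h1t : 1 / (1 + t) = p := by
        rw [ht, hq]
        field_simp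
        ring
      refine ⟨t, ⟨htpos.le, τ, ⟨hτpsd, hτtr⟩, ?_⟩, h1t⟩
      have hmix : (1 / (1 + t)) • (proj (e j) + t • τ) = ρT := by
        rw [h1t, hτ, smul_smul, smul_add, smul_smul]
        have hco : p * (t * q⁻¹) = 1 := by
          rw [ht]
          field_simp
        rw [hco, one_smul, add_comm, sub_add_cancel]
      rw [hmix]
      exact hmem
  obtain ⟨t, htmem, htp⟩ := hkey
  have hRle : R ≤ t := by
    rw [hR, robustness]
    apply csInf_le
    · exact ⟨0, fun x hx => hx.1⟩
    · exact htmem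
  have h1t : 0 < 1 + t := by linarith [htmem.1]
  have h1R : 0 < 1 + R := by linarith
  have hle : 1 / (1 + t) ≤ 1 / (1 + R) :=
    div_le_div_of_nonneg_left (by norm_num) h1R (by linarith)
  rw [htp] at hle
  exact lt_irrefl p (lt_of_le_of_lt hle hcond)
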